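/- arXiv:0903.4957 — 7 statements merged into one kernel-verified Lean document; each statement's English description precedes it below -/
import Mathlib

section
/- Let (X,d) be a metric space and ν : X → ℝ be 1-Lipschitz with respect to d. Then the function d∞(a,b) = θ(d(a,b))/(1 + min(ν(a),ν(b))), where θ(t) = t/(1+t), satisfies the triangle inequality: d∞(a,c) ≤ d∞(a,b) + d∞(b,c) for all a,b,c ∈ X with ν ≥ 0. -/
/-!
Write `m₁ = min(ν a, ν b)` and `m₂ = min(ν b, ν c)` and assume `m₁ ≤ m₂` (the other case is the
mirror image `a ↔ c`). Then `m₁ ≤ min(ν a, ν c)`, and since `ν` is 1-Lipschitz,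
`m₂ ≤ m₁ + d(a,b)`. With `u = d(a,b)` and `v = d(b,c)`, monotonicity of `θ` and the bound
`θ(u + v) ≤ θ(u) + θ(v)/(1 + u)` give
`d∞(a,c) ≤ θ(u + v)/(1 + m₁) ≤ θ(u)/(1 + m₁) + θ(v)/(1 + m₁ + u) ≤ d∞(a,b) + d∞(b,c)`.
-/

noncomputable def theta (t : ℝ) : ℝ := t / (1 + t)

lemma theta_nonneg {t : ℝ} (ht : 0 ≤ t) : 0 ≤ theta t :=
  div_nonneg ht (by linarith)

lemma theta_le_theta {s t : ℝ} (hs : 0 ≤ s) (hst : s ≤ t) : theta s ≤ theta t := by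
  rw [theta, theta, div_le_div_iff₀ (by linarith) (by linarith)]
  nlinarith

lemma theta_add_le {u v : ℝ} (hu : 0 ≤ u) (hv : 0 ≤ v) :
    theta (u + v) ≤ theta u + theta v / (1 + u) := by
  have hdiff : theta (u + v) - theta u = v / ((1 + u) * (1 + (u + v))) := by
    unfold theta
    field_simp
    ring
  calc theta (u + v)
      = theta u + v / ((1 + u) * (1 + (u + v))) := by linarith
    _ ≤ theta u + v / ((1 + u) * (1 + v)) := by gcongr; linarith
    _ = theta u + theta v / (1 + u) := by unfold theta; rw [div_div, mul_comm (1 + v)]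

lemma theta_add_div_le {u v m : ℝ} (hu : 0 ≤ u) (hv : 0 ≤ v) (hm : 0 ≤ m) :
    theta (u + v) / (1 + m) ≤ theta u / (1 + m) + theta v / (1 + m + u) := by
  have hθv := theta_nonneg hv
  calc theta (u + v) / (1 + m)
      ≤ (theta u + theta v / (1 + u)) / (1 + m) := by
        gcongr
        exact theta_add_le hu hv
    _ = theta u / (1 + m) + theta v / ((1 + u) * (1 + m)) := by
        rw [add_div, div_div (theta v)]
    _ ≤ theta u / (1 + m) + theta v / (1 + m + u) := by
        gcongr
        nlinarith

lemma min_le_min_add_dist {X : Type*} [PseudoMetricSpace X] {ν : X → ℝ}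
    (hν : LipschitzWith 1 ν) (a b c : X) :
    min (ν b) (ν c) ≤ min (ν a) (ν b) + dist a b := by
  have hab : ν b ≤ ν a + dist a b := by simpa [dist_comm] using hν.le_add_mul b a
  rw [← min_add_add_right]
  exact le_min (min_le_left _ _ |>.trans hab)
    (min_le_left _ _ |>.trans (le_add_of_nonneg_right dist_nonneg))

section EmboundedDist

variable {X : Type*} [PseudoMetricSpace X] {ν : X → ℝ}

noncomputable def emboundedDist (ν : X → ℝ) (a b : X) : ℝ :=
  theta (dist a b) / (1 + min (ν a) (ν b))

lemma emboundedDist_comm (a b : X) : emboundedDist ν a b = emboundedDist ν b a := by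
  rw [emboundedDist, emboundedDist, dist_comm, min_comm]

lemma emboundedDist_triangle_of_min_le (hν0 : ∀ x, 0 ≤ ν x) (hν : LipschitzWith 1 ν)
    {a b c : X} (h : min (ν a) (ν b) ≤ min (ν b) (ν c)) :
    emboundedDist ν a c ≤ emboundedDist ν a b + emboundedDist ν b c := by
  have hm : min (ν a) (ν b) ≤ min (ν a) (ν c) :=
    le_min (min_le_left _ _) (h.trans (min_le_right _ _))
  have hm₁ : 0 ≤ min (ν a) (ν b) := le_min (hν0 a) (hν0 b)
  have hm₂ : 0 ≤ min (ν b) (ν c) := le_min (hν0 b) (hν0 c)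
  have hm₂₁ := min_le_min_add_dist hν a b c
  have hθ : 0 ≤ theta (dist a b + dist b c) := theta_nonneg (by positivity)
  unfold emboundedDist
  calc theta (dist a c) / (1 + min (ν a) (ν c))
      ≤ theta (dist a b + dist b c) / (1 + min (ν a) (ν b)) :=
        div_le_div₀ hθ (theta_le_theta dist_nonneg (dist_triangle a b c)) (by positivity)
          (by linarith)
    _ ≤ theta (dist a b) / (1 + min (ν a) (ν b)) +
          theta (dist b c) / (1 + min (ν a) (ν b) + dist a b) :=
        theta_add_div_le dist_nonneg dist_nonneg hm₁
    _ ≤ theta (dist a b) / (1 + min (ν a) (ν b)) +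
          theta (dist b c) / (1 + min (ν b) (ν c)) := by
        have hθbc : 0 ≤ theta (dist b c) := theta_nonneg dist_nonneg
        gcongr _ + _ / ?_
        linarith

theorem emboundedDist_triangle (hν0 : ∀ x, 0 ≤ ν x) (hν : LipschitzWith 1 ν) (a b c : X) :
    emboundedDist ν a c ≤ emboundedDist ν a b + emboundedDist ν b c := by
  rcases le_total (min (ν a) (ν b)) (min (ν b) (ν c)) with h | h
  · exact emboundedDist_triangle_of_min_le hν0 hν h
  · rw [min_comm (ν a), min_comm (ν b)] at h
    have := emboundedDist_triangle_of_min_le hν0 hν h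
    rw [emboundedDist_comm c a, emboundedDist_comm c b, emboundedDist_comm b a] at this
    linarith

end EmboundedDist

/-- The embounded distance `d∞(a,b) = θ(d(a,b))/(1 + min(ν(a),ν(b)))`,
with `θ(t) = t/(1+t)` and `ν` a nonnegative 1-Lipschitz gauge,
satisfies the triangle inequality. -/
theorem embounded_triangle {X : Type*} [MetricSpace X]
    (ν : X → ℝ) (hν0 : ∀ x, 0 ≤ ν x)
    (hνlip : ∀ x y, |ν x - ν y| ≤ dist x y)
    (dInf : X → X → ℝ)
    (hdInf : ∀ a b, dInf a b =
      (dist a b / (1 + dist a b)) / (1 + min (ν a) (ν b))) :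
    ∀ a b c : X, dInf a c ≤ dInf a b + dInf b c := by
  obtain rfl : dInf = emboundedDist ν := funext₂ hdInf
  have hν : LipschitzWith 1 ν :=
    .of_le_add fun x y => by linarith [abs_sub_le_iff.mp (hνlip x y)]
  exact emboundedDist_triangle hν0 hν
end

section
/- Let (X,d) be a metric space and ν : X → [0,∞) be 1-Lipschitz, and set d∞(a,b) = θ(d(a,b))/(1 + min(ν(a),ν(b))) with θ(t)=t/(1+t). For r' > r ≥ 0, the d∞-neighbourhood of radius θ(r'-r)/(1+r) of the set {x : ν(x) ≤ r} is contained in {x : ν(x) < r'}. -/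
theorem div_one_add_self_lt_div_one_add_self_iff {α : Type*} [Field α] [LinearOrder α]
    [IsStrictOrderedRing α] {s t : α} (hs : 0 ≤ s) (ht : 0 ≤ t) :
    s / (1 + s) < t / (1 + t) ↔ s < t := by
  rw [div_lt_div_iff₀ (by linarith) (by linarith)]
  constructor <;> intro h <;> linarith

/-- The `d∞`-neighbourhood of radius `θ(r'-r)/(1+r)` of the ν-ball of radius `r`
is contained in the open ν-ball of radius `r'`. -/
theorem embounded_ball_neighbourhood {X : Type*} [MetricSpace X]
    (ν : X → ℝ) (hν0 : ∀ x, 0 ≤ ν x)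
    (hνlip : ∀ x y, |ν x - ν y| ≤ dist x y)
    (dInf : X → X → ℝ)
    (hdInf : ∀ a b, dInf a b =
      (dist a b / (1 + dist a b)) / (1 + min (ν a) (ν b))) :
    ∀ r r' : ℝ, 0 ≤ r → r < r' →
      {b : X | ∃ a, ν a ≤ r ∧ dInf a b < ((r' - r) / (1 + (r' - r))) / (1 + r)}
        ⊆ {x : X | ν x < r'} := by
  rintro r r' hr hrr' b ⟨a, ha, hd⟩
  have hθ : dist a b / (1 + dist a b) / (1 + r) < (r' - r) / (1 + (r' - r)) / (1 + r) :=
    calc dist a b / (1 + dist a b) / (1 + r)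
        ≤ dist a b / (1 + dist a b) / (1 + min (ν a) (ν b)) := by
          have hmin : 0 ≤ min (ν a) (ν b) := le_min (hν0 a) (hν0 b)
          have hminr : min (ν a) (ν b) ≤ r := (min_le_left _ _).trans ha
          gcongr
      _ = dInf a b := (hdInf a b).symm
      _ < _ := hd
  have hdist : dist a b < r' - r :=
    (div_one_add_self_lt_div_one_add_self_iff dist_nonneg (by linarith)).1
      ((div_lt_div_iff_of_pos_right (by linarith)).1 hθ)
  have hlip : ν b - ν a ≤ dist a b := by
    simpa [dist_comm] using (le_abs_self _).trans (hνlip b a)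
  show ν b < r'
  linarith
end

section
/- Let (X,d) be a complete metric space, ν : X → [0,∞) 1-Lipschitz with bounded ν-balls, and d∞ the embounded metric d∞(a,b) = θ(d(a,b))/(1 + min(ν(a),ν(b))), θ(t)=t/(1+t). If (aₙ) is d∞-Cauchy and there is r such that ν(aₙ) ≤ r for infinitely many n, then (aₙ) converges in d∞ to some point of X. -/
/-!
Since `θ(d(a, b)) ≤ (1 + r') d∞(a, b)` whenever `ν a ≤ r'` or `ν b ≤ r'`, the metrics
`d` and `d∞` are uniformly equivalent on every sublevel set of `ν`. A `d∞`-Cauchy sequence that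
visits `{ν ≤ r}` infinitely often stays `d`-close to such a visit, so by the Lipschitz bound it
eventually lies in `{ν ≤ r + 1}`; there it is `d`-Cauchy, its `d`-limit exists by completeness,
and `d∞ ≤ d` makes it a `d∞`-limit as well.
-/

open Filter

lemma div_one_add_lt_div_one_add_iff {s t : ℝ} (hs : 0 ≤ s) (ht : 0 ≤ t) :
    s / (1 + s) < t / (1 + t) ↔ s < t := by
  rw [div_lt_div_iff₀ (by linarith) (by linarith)]
  constructor <;> intro h <;> nlinarith

lemma one_add_min_pos {X : Type*} {ν : X → ℝ} (hν0 : ∀ x, 0 ≤ ν x) (x y : X) :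
    0 < 1 + min (ν x) (ν y) := by
  linarith [le_min (hν0 x) (hν0 y)]

section Embounded

variable {X : Type*} [MetricSpace X] {ν : X → ℝ}

noncomputable def embDist (ν : X → ℝ) (x y : X) : ℝ :=
  dist x y / (1 + dist x y) / (1 + min (ν x) (ν y))

lemma embDist_nonneg (hν0 : ∀ x, 0 ≤ ν x) (x y : X) : 0 ≤ embDist ν x y :=
  div_nonneg (by positivity) (one_add_min_pos hν0 x y).le

lemma embDist_le_dist (hν0 : ∀ x, 0 ≤ ν x) (x y : X) : embDist ν x y ≤ dist x y := by
  have h1 : 1 ≤ 1 + min (ν x) (ν y) := by linarith [le_min (hν0 x) (hν0 y)]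
  calc embDist ν x y ≤ dist x y / (1 + dist x y) := div_le_self (by positivity) h1
    _ ≤ dist x y := div_le_self dist_nonneg (by linarith [dist_nonneg (x := x) (y := y)])

lemma div_one_add_dist_le_mul_embDist (hν0 : ∀ x, 0 ≤ ν x) {x y : X} {R : ℝ}
    (hR : min (ν x) (ν y) ≤ R) :
    dist x y / (1 + dist x y) ≤ (1 + R) * embDist ν x y := by
  have hpos := one_add_min_pos hν0 x y
  calc dist x y / (1 + dist x y) = (1 + min (ν x) (ν y)) * embDist ν x y := by
        rw [embDist, mul_div_cancel₀ _ hpos.ne']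
    _ ≤ (1 + R) * embDist ν x y := by
        gcongr
        exact embDist_nonneg hν0 x y

variable {a : ℕ → X}
  (hCauchy : ∀ ε > (0 : ℝ), ∃ N : ℕ, ∀ m ≥ N, ∀ n ≥ N, embDist ν (a m) (a n) < ε)

include hCauchy in
lemma eventually_le_add_one_of_frequently_le (hν0 : ∀ x, 0 ≤ ν x)
    (hνlip : ∀ x y, |ν x - ν y| ≤ dist x y) {r : ℝ} (hr : ∃ᶠ n in atTop, ν (a n) ≤ r) :
    ∀ᶠ n in atTop, ν (a n) ≤ r + 1 := by
  have hr0 : 0 ≤ r := by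
    obtain ⟨n, hn⟩ := hr.exists
    exact (hν0 _).trans hn
  obtain ⟨N, hN⟩ := hCauchy (1 / (2 * (1 + r))) (by positivity)
  obtain ⟨m, hmN, hm⟩ := frequently_atTop.mp hr N
  refine eventually_atTop.mpr ⟨N, fun n hn => ?_⟩
  have hθ : dist (a n) (a m) / (1 + dist (a n) (a m)) < 1 / (1 + 1) :=
    calc dist (a n) (a m) / (1 + dist (a n) (a m))
        ≤ (1 + r) * embDist ν (a n) (a m) :=
          div_one_add_dist_le_mul_embDist hν0 ((min_le_right _ _).trans hm)
      _ < (1 + r) * (1 / (2 * (1 + r))) := by gcongr; exact hN n hn m hmN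
      _ = 1 / (1 + 1) := by field_simp; norm_num
  have hdist := (div_one_add_lt_div_one_add_iff dist_nonneg zero_le_one).mp hθ
  linarith [(abs_sub_le_iff.mp (hνlip (a n) (a m))).1]

include hCauchy in
lemma cauchySeq_of_eventually_le (hν0 : ∀ x, 0 ≤ ν x) {R : ℝ}
    (hR : ∀ᶠ n in atTop, ν (a n) ≤ R) : CauchySeq a := by
  obtain ⟨N₀, hN₀⟩ := eventually_atTop.mp hR
  have hR0 : 0 ≤ R := (hν0 _).trans (hN₀ N₀ le_rfl)
  refine Metric.cauchySeq_iff.mpr fun ε hε => ?_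
  obtain ⟨N₁, hN₁⟩ := hCauchy (ε / (1 + ε) / (1 + R)) (by positivity)
  refine ⟨max N₀ N₁, fun m hm n hn => ?_⟩
  have hθ : dist (a m) (a n) / (1 + dist (a m) (a n)) < ε / (1 + ε) :=
    calc dist (a m) (a n) / (1 + dist (a m) (a n))
        ≤ (1 + R) * embDist ν (a m) (a n) :=
          div_one_add_dist_le_mul_embDist hν0
            ((min_le_left _ _).trans (hN₀ m (le_of_max_le_left hm)))
      _ < (1 + R) * (ε / (1 + ε) / (1 + R)) := by
          gcongr; exact hN₁ m (le_of_max_le_right hm) n (le_of_max_le_right hn)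
      _ = ε / (1 + ε) := mul_div_cancel₀ _ (by positivity)
  exact (div_one_add_lt_div_one_add_iff dist_nonneg hε.le).mp hθ

end Embounded

theorem embounded_cauchy_bounded_converges_general {X : Type*} [MetricSpace X]
    [CompleteSpace X]
    (ν : X → ℝ) (hν0 : ∀ x, 0 ≤ ν x)
    (hνlip : ∀ x y, |ν x - ν y| ≤ dist x y)
    (dInf : X → X → ℝ)
    (hdInf : ∀ a b, dInf a b =
      (dist a b / (1 + dist a b)) / (1 + min (ν a) (ν b)))
    (a : ℕ → X)
    (hCauchy : ∀ ε > (0:ℝ), ∃ N : ℕ, ∀ m ≥ N, ∀ n ≥ N, dInf (a m) (a n) < ε)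
    (r : ℝ) (hr : ∀ N : ℕ, ∃ n ≥ N, ν (a n) ≤ r) :
    ∃ x : X, Filter.Tendsto (fun n => dInf (a n) x) Filter.atTop (nhds 0) := by
  obtain rfl : dInf = embDist ν := funext₂ hdInf
  have hbounded := eventually_le_add_one_of_frequently_le hCauchy hν0 hνlip
    (frequently_atTop.mpr hr)
  obtain ⟨x, hx⟩ := cauchySeq_tendsto_of_complete (cauchySeq_of_eventually_le hCauchy hν0 hbounded)
  exact ⟨x, squeeze_zero (fun n => embDist_nonneg hν0 _ _) (fun n => embDist_le_dist hν0 _ _)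
    (tendsto_iff_dist_tendsto_zero.mp hx)⟩

/-- A `d∞`-Cauchy sequence whose gauge is bounded infinitely often converges
(in `d∞`) to a point of the space. -/
theorem embounded_cauchy_bounded_converges {X : Type*} [MetricSpace X]
    [CompleteSpace X]
    (ν : X → ℝ) (hν0 : ∀ x, 0 ≤ ν x)
    (hνlip : ∀ x y, |ν x - ν y| ≤ dist x y)
    (hballs : ∀ r : ℝ, Bornology.IsBounded {x : X | ν x ≤ r})
    (dInf : X → X → ℝ)
    (hdInf : ∀ a b, dInf a b =
      (dist a b / (1 + dist a b)) / (1 + min (ν a) (ν b)))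
    (a : ℕ → X)
    (hCauchy : ∀ ε > (0:ℝ), ∃ N : ℕ, ∀ m ≥ N, ∀ n ≥ N, dInf (a m) (a n) < ε)
    (r : ℝ) (hr : ∀ N : ℕ, ∃ n ≥ N, ν (a n) ≤ r) :
    ∃ x : X, Filter.Tendsto (fun n => dInf (a n) x) Filter.atTop (nhds 0) :=
  embounded_cauchy_bounded_converges_general ν hν0 hνlip dInf hdInf a hCauchy r hr
end

section
/- Let X, Y, Z be gauged spaces and f : X → Y, g : Y → Z maps respecting continuity moduli δ_f, δ_g respectively under ν (meaning: if ν(x),ν(y) < 1/ε and d(x,y) < δ(ε) then d(f(x),f(y)) ≤ ε and ν(f(x)) ≤ 1/δ(ε)), with δ_f, δ_g ≤ id. Then g ∘ f respects the modulus δ_f ∘ δ_g ∘ δ_f under ν. -/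
/-!
Write `a = δf ε` and `b = δg a`. Applying `f` at scale `ε` bounds the gauge of `f x`, `f y` by
`1 / a`. Left continuity of a modulus upgrades "respects `δ`" to a statement with a non-strict
gauge hypothesis and a strict distance conclusion at the same scale; used for `f` at scale `b` it
gives `d(f x, f y) < b = δg a`, and then for `g` at scale `a` it gives both bounds for `g ∘ f`.
-/

/-- `f` respects the modulus `δ` under the gauges `νX`, `νY`. -/
def Respects {X Y : Type*} [PseudoMetricSpace X] [PseudoMetricSpace Y]
    (νX : X → ℝ) (νY : Y → ℝ) (δ : ℝ → ℝ) (f : X → Y) : Prop :=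
  ∀ ε > (0:ℝ), ∀ x y : X, νX x < 1 / ε → νX y < 1 / ε → dist x y < δ ε →
    dist (f x) (f y) ≤ ε ∧ νY (f x) ≤ 1 / δ ε

def IsModulus (δ : ℝ → ℝ) : Prop :=
  (∀ ε > (0:ℝ), δ ε > 0) ∧
  (∀ ε ε' : ℝ, 0 < ε → ε ≤ ε' → δ ε ≤ δ ε') ∧
  (∀ ε > (0:ℝ), δ ε = sSup (δ '' Set.Ioo 0 ε))

namespace IsModulus

variable {δ : ℝ → ℝ}

theorem pos (hδ : IsModulus δ) {ε : ℝ} (hε : 0 < ε) : 0 < δ ε := hδ.1 ε hε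

theorem mono (hδ : IsModulus δ) {ε ε' : ℝ} (hε : 0 < ε) (h : ε ≤ ε') : δ ε ≤ δ ε' :=
  hδ.2.1 ε ε' hε h

theorem exists_lt_of_lt (hδ : IsModulus δ) {ε r : ℝ} (hε : 0 < ε) (hr : r < δ ε) :
    ∃ t ∈ Set.Ioo 0 ε, r < δ t := by
  rw [hδ.2.2 ε hε] at hr
  obtain ⟨_, ⟨t, ht, rfl⟩, hrt⟩ := exists_lt_of_lt_csSup ((Set.nonempty_Ioo.mpr hε).image δ) hr
  exact ⟨t, ht, hrt⟩

theorem le_one_div_of_forall_Ico (hδ : IsModulus δ) {s₀ ε M : ℝ} (hs₀ : 0 < s₀)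
    (hs₀ε : s₀ < ε) (h : ∀ s ∈ Set.Ico s₀ ε, M ≤ 1 / δ s) : M ≤ 1 / δ ε := by
  have hε : 0 < ε := hs₀.trans hs₀ε
  rcases le_or_gt M 0 with hM | hM
  · exact hM.trans (one_div_pos.mpr (hδ.pos hε)).le
  have hδs : ∀ s ∈ Set.Ico s₀ ε, δ s ≤ 1 / M := fun s hs =>
    (le_one_div hM (hδ.pos (hs₀.trans_le hs.1))).mp (h s hs)
  have hδε : δ ε ≤ 1 / M := by
    rw [hδ.2.2 ε hε]
    refine csSup_le ((Set.nonempty_Ioo.mpr hε).image δ) ?_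
    rintro _ ⟨s, hs, rfl⟩
    calc δ s ≤ δ (max s₀ s) := hδ.mono hs.1 (le_max_right _ _)
      _ ≤ 1 / M := hδs _ ⟨le_max_left _ _, max_lt hs₀ε hs.2⟩
  exact (le_one_div (hδ.pos hε) hM).mp hδε

end IsModulus

namespace Respects

variable {X Y : Type*} [PseudoMetricSpace X] [PseudoMetricSpace Y]
  {νX : X → ℝ} {νY : Y → ℝ} {δ : ℝ → ℝ} {f : X → Y}

theorem dist_lt_and_gauge_le (hf : Respects νX νY δ f) (hδ : IsModulus δ) {ε : ℝ} (hε : 0 < ε)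
    {x y : X} (hx : νX x ≤ 1 / ε) (hy : νX y ≤ 1 / ε) (hd : dist x y < δ ε) :
    dist (f x) (f y) < ε ∧ νY (f x) ≤ 1 / δ ε := by
  obtain ⟨s₀, hs₀, hds₀⟩ := hδ.exists_lt_of_lt hε hd
  have hf_Ico : ∀ s ∈ Set.Ico s₀ ε, dist (f x) (f y) ≤ s ∧ νY (f x) ≤ 1 / δ s := by
    intro s hs
    have hs_pos : 0 < s := hs₀.1.trans_le hs.1
    have hgauge : 1 / ε < 1 / s := one_div_lt_one_div_of_lt hs_pos hs.2
    exact hf s hs_pos x y (hx.trans_lt hgauge) (hy.trans_lt hgauge)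
      (hds₀.trans_le (hδ.mono hs₀.1 hs.1))
  exact ⟨(hf_Ico s₀ ⟨le_rfl, hs₀.2⟩).1.trans_lt hs₀.2,
    hδ.le_one_div_of_forall_Ico hs₀.1 hs₀.2 fun s hs => (hf_Ico s hs).2⟩

end Respects

theorem respects_comp_general {X Y Z : Type*}
    [PseudoMetricSpace X] [PseudoMetricSpace Y] [PseudoMetricSpace Z]
    (νX : X → ℝ) (νY : Y → ℝ) (νZ : Z → ℝ)
    (f : X → Y) (g : Y → Z) (δf δg : ℝ → ℝ)
    (hδf : IsModulus δf) (hδg : IsModulus δg)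
    (hδf_le : ∀ ε > (0:ℝ), δf ε ≤ ε) (hδg_le : ∀ ε > (0:ℝ), δg ε ≤ ε)
    (hf : Respects νX νY δf f) (hg : Respects νY νZ δg g) :
    Respects νX νZ (δf ∘ δg ∘ δf) (g ∘ f) := by
  intro ε hε x y hx hy hd
  set a := δf ε
  set b := δg a
  have ha : 0 < a := hδf.pos hε
  have hb : 0 < b := hδg.pos ha
  have haε : a ≤ ε := hδf_le ε hε
  have hbε : b ≤ ε := (hδg_le a ha).trans haε
  have hd_ε : dist x y < δf ε := hd.trans_le (hδf.mono hb hbε)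
  have hfx : νY (f x) ≤ 1 / a := (hf ε hε x y hx hy hd_ε).2
  have hfy : νY (f y) ≤ 1 / a := (hf ε hε y x hy hx (dist_comm x y ▸ hd_ε)).2
  have hgauge_b : 1 / ε ≤ 1 / b := one_div_le_one_div_of_le hb hbε
  have hdf : dist (f x) (f y) < b :=
    (hf.dist_lt_and_gauge_le hδf hb (hx.le.trans hgauge_b) (hy.le.trans hgauge_b) hd).1
  obtain ⟨hdg, hνg⟩ := hg.dist_lt_and_gauge_le hδg ha hfx hfy hdf
  exact ⟨hdg.le.trans haε,
    hνg.trans (one_div_le_one_div_of_le (hδf.pos hb) (hδf_le b hb))⟩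

/-- Composition of maps between gauged spaces respecting moduli `≤ id` respects
the composed modulus `δf ∘ δg ∘ δf`. -/
theorem respects_comp {X Y Z : Type*}
    [PseudoMetricSpace X] [PseudoMetricSpace Y] [PseudoMetricSpace Z]
    (νX : X → ℝ) (νY : Y → ℝ) (νZ : Z → ℝ)
    (hνX : ∀ x y, |νX x - νX y| ≤ dist x y)
    (hνY : ∀ x y, |νY x - νY y| ≤ dist x y)
    (hνZ : ∀ x y, |νZ x - νZ y| ≤ dist x y)
    (f : X → Y) (g : Y → Z) (δf δg : ℝ → ℝ)
    (hδf : IsModulus δf) (hδg : IsModulus δg)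
    (hδf_le : ∀ ε > (0:ℝ), δf ε ≤ ε) (hδg_le : ∀ ε > (0:ℝ), δg ε ≤ ε)
    (hf : Respects νX νY δf f) (hg : Respects νY νZ δg g) :
    Respects νX νZ (δf ∘ δg ∘ δf) (g ∘ f) :=
  respects_comp_general νX νY νZ f g δf δg hδf hδg hδf_le hδg_le hf hg
end

section
/- A map f between gauged spaces is uniformly continuous under ν (i.e., respects some continuity modulus under ν) if and only if its restriction to every bounded set is uniformly continuous and has bounded image. -/
lemma exists_pos_le_lt_one_div {ε : ℝ} (hε : 0 < ε) (r : ℝ) :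
    ∃ ε', 0 < ε' ∧ ε' ≤ ε ∧ r < 1 / ε' := by
  have hr : 0 < 1 / (|r| + 1) := by positivity
  refine ⟨min ε (1 / (|r| + 1)), lt_min hε hr, min_le_left _ _, ?_⟩
  calc r < |r| + 1 := by linarith [le_abs_self r]
    _ = 1 / (1 / (|r| + 1)) := (one_div_one_div _).symm
    _ ≤ 1 / min ε (1 / (|r| + 1)) := one_div_le_one_div_of_le (lt_min hε hr) (min_le_right _ _)

section

variable {X Y : Type*} [PseudoMetricSpace X] [PseudoMetricSpace Y]
  {νX : X → ℝ} {νY : Y → ℝ} {δ : ℝ → ℝ} {f : X → Y}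

theorem Respects.exists_dist_le (hf : Respects νX νY δ f) (hδ : ∀ ε > 0, δ ε > 0) (r : ℝ)
    {ε : ℝ} (hε : 0 < ε) :
    ∃ η > 0, ∀ x y, νX x ≤ r → νX y ≤ r → dist x y < η → dist (f x) (f y) ≤ ε := by
  obtain ⟨ε', hε', hε'ε, hr⟩ := exists_pos_le_lt_one_div hε r
  exact ⟨δ ε', hδ ε' hε', fun x y hx hy hxy =>
    (hf ε' hε' x y (hx.trans_lt hr) (hy.trans_lt hr) hxy).1.trans hε'ε⟩

theorem Respects.exists_gauge_le (hf : Respects νX νY δ f) (hδ : ∀ ε > 0, δ ε > 0) (r : ℝ) :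
    ∃ s, ∀ x, νX x ≤ r → νY (f x) ≤ s := by
  obtain ⟨ε', hε', -, hr⟩ := exists_pos_le_lt_one_div one_pos r
  refine ⟨1 / δ ε', fun x hx => (hf ε' hε' x x (hx.trans_lt hr) (hx.trans_lt hr) ?_).2⟩
  simpa using hδ ε' hε'

theorem exists_respects_of_sublevel
    (huc : ∀ r, ∀ ε > 0, ∃ η > 0, ∀ x y, νX x ≤ r → νX y ≤ r → dist x y < η →
      dist (f x) (f y) ≤ ε)
    (hbdd : ∀ r, ∃ s, ∀ x, νX x ≤ r → νY (f x) ≤ s) :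
    ∃ δ : ℝ → ℝ, (∀ ε > 0, δ ε > 0) ∧ Respects νX νY δ f := by
  have hmod : ∀ ε > 0, ∃ d > 0, ∀ x y, νX x < 1 / ε → νX y < 1 / ε → dist x y < d →
      dist (f x) (f y) ≤ ε ∧ νY (f x) ≤ 1 / d := by
    intro ε hε
    obtain ⟨η, hη, hηf⟩ := huc (1 / ε) ε hε
    obtain ⟨s, hs⟩ := hbdd (1 / ε)
    obtain ⟨d, hd, hdη, hsd⟩ := exists_pos_le_lt_one_div hη s
    exact ⟨d, hd, fun x y hx hy hxy =>
      ⟨hηf x y hx.le hy.le (hxy.trans_le hdη), (hs x hx.le).trans hsd.le⟩⟩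
  choose! δ hδ hfδ using hmod
  exact ⟨δ, hδ, hfδ⟩

end

theorem uniformly_continuous_under_gauge_iff_general {X Y : Type*}
    [PseudoMetricSpace X] [PseudoMetricSpace Y]
    (νX : X → ℝ) (νY : Y → ℝ)
    (f : X → Y) :
    (∃ δ : ℝ → ℝ, (∀ ε > (0:ℝ), δ ε > 0) ∧ Respects νX νY δ f) ↔
    (∀ r : ℝ,
      (∀ ε > (0:ℝ), ∃ η > (0:ℝ), ∀ x y : X, νX x ≤ r → νX y ≤ r →
        dist x y < η → dist (f x) (f y) ≤ ε) ∧
      (∃ s : ℝ, ∀ x : X, νX x ≤ r → νY (f x) ≤ s)) := by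
  constructor
  · rintro ⟨δ, hδ, hf⟩ r
    exact ⟨fun ε hε => hf.exists_dist_le hδ r hε, hf.exists_gauge_le hδ r⟩
  · intro h
    exact exists_respects_of_sublevel (fun r => (h r).1) (fun r => (h r).2)

/-- A map between gauged spaces is uniformly continuous under the gauge iff its
restriction to every bounded set (equivalently, every ν-ball) is uniformly
continuous and has bounded image. -/
theorem uniformly_continuous_under_gauge_iff {X Y : Type*}
    [PseudoMetricSpace X] [PseudoMetricSpace Y]
    (νX : X → ℝ) (νY : Y → ℝ)
    (hνX0 : ∀ x, 0 ≤ νX x) (hνY0 : ∀ y, 0 ≤ νY y)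
    (hνX : ∀ x y, |νX x - νX y| ≤ dist x y)
    (hνY : ∀ x y, |νY x - νY y| ≤ dist x y)
    (hballsX : ∀ r : ℝ, Bornology.IsBounded {x : X | νX x ≤ r})
    (hballsY : ∀ r : ℝ, Bornology.IsBounded {y : Y | νY y ≤ r})
    (f : X → Y) :
    (∃ δ : ℝ → ℝ, (∀ ε > (0:ℝ), δ ε > 0) ∧ Respects νX νY δ f) ↔
    (∀ r : ℝ,
      (∀ ε > (0:ℝ), ∃ η > (0:ℝ), ∀ x y : X, νX x ≤ r → νX y ≤ r →
        dist x y < η → dist (f x) (f y) ≤ ε) ∧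
      (∃ s : ℝ, ∀ x : X, νX x ≤ r → νY (f x) ≤ s)) :=
  uniformly_continuous_under_gauge_iff_general νX νY f
end

section
/- Let E be a real Banach space, b₀,…,b_{n-1} ∈ E linearly independent with s = min{‖Σ λᵢ bᵢ‖ : Σ|λᵢ| = 1} > 0, and c₀,…,c_{n-1} ∈ E with ‖bᵢ − cᵢ‖ ≤ δ for all i, where δ = sε/(2n) and 0 < ε < 1. Then there exists a bounded linear operator S : E → E with S(bᵢ) = bᵢ − cᵢ for all i and ‖S‖ ≤ ε/2; consequently T = I − S is a bijective bounded linear map with e^{−ε}‖v‖ ≤ ‖T v‖ ≤ e^{ε}‖v‖ for all v, and T(bᵢ) = cᵢ. -/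
/-!
By the hypothesis on `s`, every coordinate functional on `span b` has norm at most `1 / s`.
Extending these functionals to `E` by Hahn–Banach and tensoring them with the vectors `bᵢ - cᵢ`
gives `S` with `‖S‖ ≤ n · (1 / s) · δ = ε / 2`. Then `I - S` is invertible by the Neumann series,
and it distorts norms by factors between `1 - ε / 2` and `1 + ε / 2`, which lie in
`[e^{-ε}, e^{ε}]` since `0 ≤ ε ≤ 1`.
-/

open Finset

section

variable {ι E : Type*} [Fintype ι] [NormedAddCommGroup E] [NormedSpace ℝ E]

theorem mul_sum_abs_le_norm_sum_smul {b : ι → E} {s : ℝ}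
    (hsmin : ∀ lam : ι → ℝ, ∑ i, |lam i| = 1 → s ≤ ‖∑ i, lam i • b i‖) (lam : ι → ℝ) :
    s * ∑ i, |lam i| ≤ ‖∑ i, lam i • b i‖ := by
  set t := ∑ i, |lam i|
  have ht0 : 0 ≤ t := sum_nonneg fun i _ => abs_nonneg (lam i)
  rcases ht0.eq_or_lt with ht | ht
  · rw [← ht, mul_zero]
    exact norm_nonneg _
  have hnormalized : ∑ i, |lam i / t| = 1 := by
    rw [← div_self ht.ne']
    simp only [abs_div, abs_of_pos ht, ← sum_div, t]
  have hscale : ∑ i, (lam i / t) • b i = t⁻¹ • ∑ i, lam i • b i := by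
    simp only [smul_sum, smul_smul, div_eq_inv_mul]
  have := hsmin _ hnormalized
  rw [hscale, norm_smul, norm_inv, Real.norm_of_nonneg ht.le, inv_mul_eq_div, le_div_iff₀ ht] at this
  linarith

theorem LinearIndependent.exists_dual_family_norm_le [DecidableEq ι] {b : ι → E}
    (hb : LinearIndependent ℝ b) {s : ℝ} (hs : 0 < s)
    (hsmin : ∀ lam : ι → ℝ, ∑ i, |lam i| = 1 → s ≤ ‖∑ i, lam i • b i‖) :
    ∃ g : ι → StrongDual ℝ E, (∀ i j, g i (b j) = if j = i then 1 else 0) ∧ ∀ i, ‖g i‖ ≤ s⁻¹ := by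
  let B := Module.Basis.span hb
  have hcoord (y : Submodule.span ℝ (Set.range b)) (i : ι) : |B.coord i y| ≤ s⁻¹ * ‖y‖ := by
    have hy : (y : E) = ∑ j, B.repr y j • b j := by
      conv_lhs => rw [← B.sum_repr y]
      simp [B]
    rw [← div_eq_inv_mul, le_div_iff₀' hs, Submodule.coe_norm, hy]
    calc s * |B.coord i y| ≤ s * ∑ j, |B.repr y j| :=
          mul_le_mul_of_nonneg_left (single_le_sum (fun j _ => abs_nonneg (B.repr y j))
            (mem_univ i)) hs.le
      _ ≤ _ := mul_sum_abs_le_norm_sum_smul hsmin _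
  choose g hg hgnorm using fun i =>
    exists_extension_norm_eq _ ((B.coord i).mkContinuous s⁻¹ (hcoord · i))
  refine ⟨g, fun i j => ?_, fun i => (hgnorm i).trans_le ?_⟩
  · rw [hg i ⟨b j, Submodule.subset_span (Set.mem_range_self j)⟩, LinearMap.mkContinuous_apply,
      ← Module.Basis.span_apply hb, Module.Basis.coord_apply, Module.Basis.repr_self,
      Finsupp.single_apply]
  · exact LinearMap.mkContinuous_norm_le _ (inv_nonneg.2 hs.le) _

theorem LinearIndependent.exists_clm_apply_eq_norm_le {F : Type*} [NormedAddCommGroup F]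
    [NormedSpace ℝ F] {b : ι → E} (hb : LinearIndependent ℝ b) {s : ℝ} (hs : 0 < s)
    (hsmin : ∀ lam : ι → ℝ, ∑ i, |lam i| = 1 → s ≤ ‖∑ i, lam i • b i‖)
    (d : ι → F) {δ : ℝ} (hd : ∀ i, ‖d i‖ ≤ δ) :
    ∃ S : E →L[ℝ] F, (∀ i, S (b i) = d i) ∧ ‖S‖ ≤ Fintype.card ι * δ / s := by
  classical
  obtain ⟨g, hgb, hgnorm⟩ := hb.exists_dual_family_norm_le hs hsmin
  refine ⟨∑ i, (g i).smulRight (d i), fun j => ?_, ?_⟩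
  · simp [hgb]
  calc ‖∑ i, (g i).smulRight (d i)‖ ≤ ∑ i, ‖g i‖ * ‖d i‖ :=
        (norm_sum_le _ _).trans_eq (by simp only [ContinuousLinearMap.norm_smulRight_apply])
    _ ≤ ∑ _i : ι, s⁻¹ * δ :=
        sum_le_sum fun i _ => mul_le_mul (hgnorm i) (hd i) (norm_nonneg _) (inv_nonneg.2 hs.le)
    _ = Fintype.card ι * δ / s := by rw [sum_const, card_univ, nsmul_eq_mul]; ring

end

theorem Real.exp_neg_le_one_sub_half {x : ℝ} (hx0 : 0 ≤ x) (hx1 : x ≤ 1) :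
    Real.exp (-x) ≤ 1 - x / 2 := by
  rw [Real.exp_neg, inv_le_iff_one_le_mul₀ (Real.exp_pos x)]
  nlinarith [mul_nonneg (sub_nonneg.2 (Real.add_one_le_exp x)) (by linarith : (0 : ℝ) ≤ 1 - x / 2),
    mul_nonneg hx0 (sub_nonneg.2 hx1)]

namespace ContinuousLinearMap

variable {𝕜 E : Type*} [NontriviallyNormedField 𝕜] [NormedAddCommGroup E] [NormedSpace 𝕜 E]

theorem bijective_sub_apply_of_norm_lt_one [CompleteSpace E] {S : E →L[𝕜] E} (hS : ‖S‖ < 1) :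
    Function.Bijective fun v => v - S v := by
  have := isUnit_iff_bijective.1 (Units.oneSub S hS).isUnit
  rwa [Units.val_oneSub] at this

variable {S : E →L[𝕜] E} {ε : ℝ}

theorem norm_sub_apply_le_exp_mul_norm (hS : ‖S‖ ≤ ε / 2) (v : E) :
    ‖v - S v‖ ≤ Real.exp ε * ‖v‖ := by
  have hexp : 1 + ε / 2 ≤ Real.exp ε := by linarith [Real.add_one_le_exp ε, norm_nonneg S]
  calc ‖v - S v‖ ≤ ‖v‖ + ‖S‖ * ‖v‖ := norm_sub_le_of_le le_rfl (S.le_opNorm v)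
    _ ≤ (1 + ε / 2) * ‖v‖ := by nlinarith [norm_nonneg v]
    _ ≤ Real.exp ε * ‖v‖ := by gcongr

theorem exp_neg_mul_norm_le_norm_sub_apply (hS : ‖S‖ ≤ ε / 2) (hε : ε ≤ 1) (v : E) :
    Real.exp (-ε) * ‖v‖ ≤ ‖v - S v‖ := by
  have hexp := Real.exp_neg_le_one_sub_half (by linarith [norm_nonneg S]) hε
  calc Real.exp (-ε) * ‖v‖ ≤ (1 - ε / 2) * ‖v‖ := by gcongr
    _ ≤ ‖v‖ - ‖S‖ * ‖v‖ := by nlinarith [norm_nonneg v]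
    _ ≤ ‖v - S v‖ := (sub_le_sub_left (S.le_opNorm v) _).trans (norm_sub_norm_le v (S v))

end ContinuousLinearMap

/-- Perturbing a linearly independent tuple `b` to a nearby tuple `c` gives a
small operator `S` with `S bᵢ = bᵢ - cᵢ`, so that `T = I - S` is an
`ε`-automorphism sending `b` to `c`. -/
theorem small_perturbation_automorphism {E : Type*} [NormedAddCommGroup E]
    [NormedSpace ℝ E] [CompleteSpace E] {n : ℕ}
    (b c : Fin n → E) (hb : LinearIndependent ℝ b)
    (s : ℝ) (hs : 0 < s)
    (hsmin : ∀ lam : Fin n → ℝ, (∑ i, |lam i|) = 1 →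
      s ≤ ‖∑ i, lam i • b i‖)
    (ε : ℝ) (hε0 : 0 < ε) (hε1 : ε < 1)
    (hbc : ∀ i, ‖b i - c i‖ ≤ s * ε / (2 * n)) :
    ∃ S : E →L[ℝ] E,
      (∀ i, S (b i) = b i - c i) ∧ ‖S‖ ≤ ε / 2 ∧
      Function.Bijective (fun v => v - S v) ∧
      (∀ v : E, Real.exp (-ε) * ‖v‖ ≤ ‖v - S v‖ ∧
        ‖v - S v‖ ≤ Real.exp ε * ‖v‖) ∧
      (∀ i, b i - S (b i) = c i) := by
  obtain ⟨S, hSb, hSnorm⟩ := hb.exists_clm_apply_eq_norm_le hs hsmin (fun i => b i - c i) hbc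
  have hS : ‖S‖ ≤ ε / 2 := by
    refine hSnorm.trans ?_
    rw [Fintype.card_fin]
    rcases n.eq_zero_or_pos with rfl | hn
    · simp only [CharP.cast_eq_zero, zero_mul, zero_div]
      positivity
    · field_simp
      rfl
  refine ⟨S, hSb, hS, S.bijective_sub_apply_of_norm_lt_one (by linarith), fun v =>
    ⟨S.exp_neg_mul_norm_le_norm_sub_apply hS hε1.le v, S.norm_sub_apply_le_exp_mul_norm hS v⟩,
    fun i => by rw [hSb, sub_sub_cancel]⟩
end

section
/- Let X, Y be gauged spaces, f : X × Y → [0,∞) a map respecting modulus δ_f under ν, and suppose there is a constant C such that f(x,y) = g(y) whenever ν(x) ≥ C, where g : Y → [0,∞) respects δ_g under ν. Then h(y) = sup_{x ∈ X} f(x,y) ∨ g(y) is well defined (finite) and respects the modulus δ_h(ε) = min(δ_g(ε), δ_f(min(ε, 1/C))) under ν. -/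
/-!
For `νX x ≥ C` the slice `f (x, ·)` is `g`, and for `νX x < C` the point `(x, y)` has gauge below
`1 / min ε (1 / C)` as soon as `νY y < 1 / ε`, so the modulus of `f` at scale `min ε (1 / C)`
applies. Hence all slices are bounded by a common constant and are uniformly `ε`-close between
`y` and `z`, and suprema of uniformly `ε`-close families are `ε`-close.
-/

open Set

namespace Real

variable {ι : Sort*} {u v : ι → ℝ} {ε : ℝ}

theorem iSup_le_iSup_add (hv : BddAbove (range v)) (hε : 0 ≤ ε) (h : ∀ i, u i ≤ v i + ε) :
    ⨆ i, u i ≤ (⨆ i, v i) + ε := by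
  cases isEmpty_or_nonempty ι
  · simp [iSup_of_isEmpty, hε]
  · exact ciSup_le fun i => (h i).trans (by gcongr; exact le_ciSup hv i)

theorem abs_iSup_sub_iSup_le (hu : BddAbove (range u)) (hv : BddAbove (range v)) (hε : 0 ≤ ε)
    (h : ∀ i, |u i - v i| ≤ ε) : |(⨆ i, u i) - ⨆ i, v i| ≤ ε := by
  refine abs_sub_le_iff.2 ⟨sub_le_iff_le_add'.2 ?_, sub_le_iff_le_add'.2 ?_⟩
  · exact iSup_le_iSup_add hv hε fun i => by linarith [(abs_sub_le_iff.1 (h i)).1]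
  · exact iSup_le_iSup_add hu hε fun i => by linarith [(abs_sub_le_iff.1 (h i)).2]

end Real

theorem Respects.apply_prod_left {X Y Z : Type*} [PseudoMetricSpace X] [PseudoMetricSpace Y]
    [PseudoMetricSpace Z] {νX : X → ℝ} {νY : Y → ℝ} {νZ : Z → ℝ} {δ : ℝ → ℝ} {f : X × Y → Z}
    (hf : Respects (fun p : X × Y => max (νX p.1) (νY p.2)) νZ δ f) {ε : ℝ} (hε : 0 < ε)
    {x : X} {y z : Y} (hx : νX x < 1 / ε) (hy : νY y < 1 / ε) (hz : νY z < 1 / ε)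
    (hd : dist y z < δ ε) :
    dist (f (x, y)) (f (x, z)) ≤ ε ∧ νZ (f (x, y)) ≤ 1 / δ ε :=
  hf ε hε (x, y) (x, z) (max_lt hx hy) (max_lt hx hz) (by simpa [Prod.dist_eq] using hd)

section EventuallyConstant

variable {X Y : Type*} [PseudoMetricSpace X] [PseudoMetricSpace Y] {νX : X → ℝ} {νY : Y → ℝ}
  {f : X × Y → ℝ} {g : Y → ℝ} {δf δg : ℝ → ℝ} {C : ℝ}

theorem bddAbove_range_of_eq_of_le
    (hf : Respects (fun p : X × Y => max (νX p.1) (νY p.2)) (fun t : ℝ => |t|) δf f)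
    (hδf0 : ∀ ε > (0:ℝ), δf ε > 0) (hC : 0 < C) (hec : ∀ x y, C ≤ νX x → f (x, y) = g y)
    (y : Y) : BddAbove (range fun x : X => f (x, y)) := by
  set ε := 1 / (max C (νY y) + 1)
  have hε : 0 < ε := one_div_pos.2 ((lt_max_of_lt_left hC).trans (lt_add_one _))
  have hinv : 1 / ε = max C (νY y) + 1 := one_div_one_div _
  have hy : νY y < 1 / ε := by rw [hinv]; linarith [le_max_right C (νY y)]
  refine ⟨max (g y) (1 / δf ε), forall_mem_range.2 fun x => ?_⟩
  rcases lt_or_ge (νX x) C with hx | hx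
  · have hx' : νX x < 1 / ε := by rw [hinv]; linarith [le_max_left C (νY y)]
    have hfx := (hf.apply_prod_left hε hx' hy hy (by simpa using hδf0 ε hε)).2
    exact ((le_abs_self _).trans hfx).trans (le_max_right _ _)
  · rw [hec x y hx]
    exact le_max_left _ _

theorem respects_max_iSup_of_eq_of_le
    (hf : Respects (fun p : X × Y => max (νX p.1) (νY p.2)) (fun t : ℝ => |t|) δf f)
    (hg : Respects νY (fun t : ℝ => |t|) δg g)
    (hδf0 : ∀ ε > (0:ℝ), δf ε > 0) (hC : 0 < C) (hec : ∀ x y, C ≤ νX x → f (x, y) = g y) :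
    Respects νY (fun t : ℝ => |t|) (fun ε => min (δg ε) (δf (min ε (1 / C))))
      (fun y => max (g y) (⨆ x, f (x, y))) := by
  intro ε hε y z hy hz hd
  obtain ⟨hdg, hdf⟩ := lt_min_iff.1 hd
  set ε' := min ε (1 / C)
  have hε' : 0 < ε' := lt_min hε (one_div_pos.2 hC)
  have hεε' : 1 / ε ≤ 1 / ε' := one_div_le_one_div_of_le hε' (min_le_left _ _)
  have hCε' : C ≤ 1 / ε' := by
    simpa using one_div_le_one_div_of_le hε' (min_le_right ε (1 / C))
  have hslice (x : X) (hx : νX x < C) :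
      dist (f (x, y)) (f (x, z)) ≤ ε' ∧ |f (x, y)| ≤ 1 / δf ε' :=
    hf.apply_prod_left hε' (hx.trans_le hCε') (hy.trans_le hεε') (hz.trans_le hεε') hdf
  have hgyz := hg ε hε y z hy hz hdg
  have hgy := (hg ε hε y y hy hy (by simpa using dist_nonneg.trans_lt hdg)).2
  have hpos : 0 < min (δg ε) (δf ε') := dist_nonneg.trans_lt hd
  have hgB : |g y| ≤ 1 / min (δg ε) (δf ε') :=
    hgy.trans (one_div_le_one_div_of_le hpos (min_le_left _ _))
  have hfB : 1 / δf ε' ≤ 1 / min (δg ε) (δf ε') :=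
    one_div_le_one_div_of_le hpos (min_le_right _ _)
  have hbdd := bddAbove_range_of_eq_of_le hf hδf0 hC hec
  have hsup : |(⨆ x, f (x, y)) - ⨆ x, f (x, z)| ≤ ε := by
    refine Real.abs_iSup_sub_iSup_le (hbdd y) (hbdd z) hε.le fun x => ?_
    rcases lt_or_ge (νX x) C with hx | hx
    · exact (hslice x hx).1.trans (min_le_left _ _)
    · rw [hec x y hx, hec x z hx]
      exact hgyz.1
  have hsupB : ⨆ x, f (x, y) ≤ 1 / min (δg ε) (δf ε') := by
    refine Real.iSup_le (fun x => ?_) (one_div_pos.2 hpos).le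
    rcases lt_or_ge (νX x) C with hx | hx
    · exact (le_abs_self _).trans ((hslice x hx).2.trans hfB)
    · rw [hec x y hx]
      exact (le_abs_self _).trans hgB
  refine ⟨(abs_max_sub_max_le_max _ _ _ _).trans (max_le hgyz.1 hsup), abs_le.2 ⟨?_, ?_⟩⟩
  · exact (neg_le_of_abs_le hgB).trans (le_max_left _ _)
  · exact max_le ((le_abs_self _).trans hgB) hsupB

end EventuallyConstant

theorem sup_eventually_constant_respects_general {X Y : Type*}
    [PseudoMetricSpace X] [PseudoMetricSpace Y]
    (νX : X → ℝ) (νY : Y → ℝ)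
    (f : X × Y → ℝ) (g : Y → ℝ)
    (δf δg : ℝ → ℝ)
    (hδf0 : ∀ ε > (0:ℝ), δf ε > 0)
    (hf : Respects (fun p : X × Y => max (νX p.1) (νY p.2)) (fun t : ℝ => |t|) δf f)
    (hg : Respects νY (fun t : ℝ => |t|) δg g)
    (C : ℝ) (hC : 0 < C)
    (hec : ∀ x y, C ≤ νX x → f (x, y) = g y)
    (h : Y → ℝ)
    (hh : ∀ y, h y = max (g y) (sSup (Set.range fun x : X => f (x, y)))) :
    (∀ y, BddAbove (Set.range fun x : X => f (x, y))) ∧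
    Respects νY (fun t : ℝ => |t|)
      (fun ε => min (δg ε) (δf (min ε (1 / C)))) h := by
  obtain rfl : h = fun y => max (g y) (⨆ x, f (x, y)) := funext hh
  exact ⟨bddAbove_range_of_eq_of_le hf hδf0 hC hec, respects_max_iSup_of_eq_of_le hf hg hδf0 hC hec⟩

/-- Supremum over the first variable of an eventually constant predicate is
well defined and respects the modulus `δ_h(ε) = δ_g(ε) ∧ δ_f(ε ∧ 1/C)`. -/
theorem sup_eventually_constant_respects {X Y : Type*}
    [PseudoMetricSpace X] [PseudoMetricSpace Y]
    (νX : X → ℝ) (νY : Y → ℝ)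
    (hνX0 : ∀ x, 0 ≤ νX x) (hνY0 : ∀ y, 0 ≤ νY y)
    (hνX : ∀ x y, |νX x - νX y| ≤ dist x y)
    (hνY : ∀ x y, |νY x - νY y| ≤ dist x y)
    (f : X × Y → ℝ) (g : Y → ℝ)
    (hf0 : ∀ p, 0 ≤ f p) (hg0 : ∀ y, 0 ≤ g y)
    (δf δg : ℝ → ℝ)
    (hδf0 : ∀ ε > (0:ℝ), δf ε > 0) (hδg0 : ∀ ε > (0:ℝ), δg ε > 0)
    (hf : Respects (fun p : X × Y => max (νX p.1) (νY p.2)) (fun t : ℝ => |t|) δf f)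
    (hg : Respects νY (fun t : ℝ => |t|) δg g)
    (C : ℝ) (hC : 0 < C)
    (hec : ∀ x y, C ≤ νX x → f (x, y) = g y)
    (h : Y → ℝ)
    (hh : ∀ y, h y = max (g y) (sSup (Set.range fun x : X => f (x, y)))) :
    (∀ y, BddAbove (Set.range fun x : X => f (x, y))) ∧
    Respects νY (fun t : ℝ => |t|)
      (fun ε => min (δg ε) (δf (min ε (1 / C)))) h :=
  sup_eventually_constant_respects_general νX νY f g δf δg hδf0 hf hg C hC hec h hh
end
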